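/- arXiv:2403.12581 — 2 statements merged into one kernel-verified Lean document; each statement's English description precedes it below -/
import Mathlib

section
/- Let C be a coherent configuration with distinct fibers R and Y. If Y is taken care of regarding restorability of R and R is restorable in C − Y, then R is restorable in C. -/
/-!  Basic machinery for the Weisfeiler-Leman algorithm on arc-colored complete
directed graphs, coherent configurations, and related notions. -/

/-- The type of colors produced after `s` refinement rounds of the
`k`-dimensional Weisfeiler-Leman algorithm, starting from arc colors in `C`.
The initial color of a `k`-tuple records, for every ordered pair of entries,
whether they are equal together with the color of the arc between them. -/
def WLIter (C : Type) (k : ℕ) : ℕ → Type :=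
  fun s => Nat.rec (Fin k → Fin k → (Prop × C)) (fun _ T => T × Multiset (Fin k → T)) s

/-- The coloring of `k`-tuples obtained after `s` rounds of `k`-dimensional
Weisfeiler-Leman refinement of the arc-colored complete graph `χ`. -/
def WLColor {V : Type} [Fintype V] {C : Type} (χ : V → V → C) (k : ℕ) :
    (s : ℕ) → (Fin k → V) → WLIter C k s
  | 0, t => fun i j => (t i = t j, χ (t i) (t j))
  | s + 1, t =>
      (WLColor χ k s t,
        (Finset.univ.val : Multiset V).map fun w =>
          fun i => WLColor χ k s (Function.update t i w))

/-- The multiset of colors of all `k`-tuples after `s` rounds of WL refinement. -/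
def WLMultiset {V : Type} [Fintype V] {C : Type} (χ : V → V → C) (k s : ℕ) :
    Multiset (WLIter C k s) :=
  (Finset.univ.val : Multiset (Fin k → V)).map (WLColor χ k s)

/-- The `k`-dimensional WL algorithm distinguishes two arc-colored complete graphs
if the multisets of (stable) colors of their `k`-tuples differ, equivalently if they
differ after some number of refinement rounds. -/
def WLDistinguishes {C : Type} (k : ℕ) {V₁ : Type} [Fintype V₁] {V₂ : Type} [Fintype V₂]
    (χ₁ : V₁ → V₁ → C) (χ₂ : V₂ → V₂ → C) : Prop :=
  ∃ s, WLMultiset χ₁ k s ≠ WLMultiset χ₂ k s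

/-- A color-preserving isomorphism between two arc-colored complete graphs. -/
def ColoredIso {C V₁ V₂ : Type} (χ₁ : V₁ → V₁ → C) (χ₂ : V₂ → V₂ → C) : Prop :=
  ∃ φ : V₁ ≃ V₂, ∀ v w : V₁, χ₂ (φ v) (φ w) = χ₁ v w

/-- The `k`-dimensional WL algorithm identifies an arc-colored complete graph if it
distinguishes it from every arc-colored complete graph that is not color-preservingly
isomorphic to it. -/
def WLIdentifies {C : Type} {V : Type} [Fintype V] (χ : V → V → C) (k : ℕ) : Prop :=
  ∀ (m : ℕ) (χ' : Fin m → Fin m → C), ¬ ColoredIso χ χ' → WLDistinguishes k χ χ'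

/-- The Weisfeiler-Leman dimension of an arc-colored complete graph: the least `k ≥ 1`
such that `k`-dimensional WL identifies it. -/
noncomputable def WLdim {C : Type} {V : Type} [Fintype V] (χ : V → V → C) : ℕ :=
  sInf {k | 1 ≤ k ∧ WLIdentifies χ k}

/-- The WL-dimension of the arc-colored graph induced on a subset `Δ` of the vertices. -/
noncomputable def WLdimOn {V : Type} [Fintype V] {C : Type} (χ : V → V → C) (Δ : Set V) : ℕ :=
  letI : Fintype Δ := (Set.toFinite Δ).fintype
  WLdim (fun v w : Δ => χ v.1 w.1)

/-- The arc coloring of a simple graph, recording adjacency. -/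
def graphColoring {V : Type} (G : SimpleGraph V) : V → V → Prop := fun v w => G.Adj v w

/-- The `k`-dimensional WL algorithm identifies the simple graph `G` if it distinguishes
`G` from every simple graph not isomorphic to `G`. -/
def GraphWLIdentifies {V : Type} [Fintype V] (G : SimpleGraph V) (k : ℕ) : Prop :=
  ∀ (m : ℕ) (H : SimpleGraph (Fin m)),
    ¬ Nonempty (G ≃g H) → WLDistinguishes k (graphColoring G) (graphColoring H)

/-- The Weisfeiler-Leman dimension of a simple graph: the least `k ≥ 1` such that the
`k`-dimensional WL algorithm identifies `G`. -/
noncomputable def graphWLdim {V : Type} [Fintype V] (G : SimpleGraph V) : ℕ :=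
  sInf {k | 1 ≤ k ∧ GraphWLIdentifies G k}

/-- A coherent configuration on a finite vertex set `Ω`: a set of nonempty binary
relations partitioning `Ω × Ω`, each consisting only of loops or only of non-loops,
closed under transposition, and satisfying the coherence condition on intersection
numbers. -/
structure CoherentConfiguration (Ω : Type) [Fintype Ω] : Type where
  rel : Set (Set (Ω × Ω))
  rel_nonempty : ∀ A ∈ rel, A.Nonempty
  exists_unique_rel : ∀ p : Ω × Ω, ∃! A, A ∈ rel ∧ p ∈ A
  loops_or_offdiag : ∀ A ∈ rel, (∀ p ∈ A, (p : Ω × Ω).1 = p.2) ∨ (∀ p ∈ A, (p : Ω × Ω).1 ≠ p.2)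
  transpose_mem : ∀ A ∈ rel, {q : Ω × Ω | (q.2, q.1) ∈ A} ∈ rel
  coherent : ∀ A ∈ rel, ∀ B ∈ rel, ∀ T ∈ rel, ∀ p ∈ T, ∀ q ∈ T,
      ({u : Ω | ((p : Ω × Ω).1, u) ∈ A ∧ (u, (p : Ω × Ω).2) ∈ B}).ncard =
      ({u : Ω | ((q : Ω × Ω).1, u) ∈ A ∧ (u, (q : Ω × Ω).2) ∈ B}).ncard

namespace CoherentConfiguration

variable {Ω : Type} [Fintype Ω]

/-- A fiber of a coherent configuration: a set whose diagonal is one of the relations. -/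
def IsFiber (C : CoherentConfiguration Ω) (Δ : Set Ω) : Prop :=
  {p : Ω × Ω | p.1 ∈ Δ ∧ p.1 = p.2} ∈ C.rel

/-- The set of fibers of a coherent configuration. -/
def fiberSet (C : CoherentConfiguration Ω) : Set (Set Ω) := {Δ | C.IsFiber Δ}

/-- The arc coloring of the complete directed graph associated with a coherent
configuration: the color of an arc is the (unique) relation containing it. -/
def ccColoring (C : CoherentConfiguration Ω) : Ω → Ω → Set (Ω × Ω) :=
  fun v w => {q | ∃ A ∈ C.rel, (v, w) ∈ A ∧ q ∈ A}

/-- The Weisfeiler-Leman dimension of a coherent configuration. -/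
noncomputable def ccWLdim (C : CoherentConfiguration Ω) : ℕ := WLdim C.ccColoring

/-- The Weisfeiler-Leman dimension of the subconfiguration induced on `Δ ⊆ Ω`. -/
noncomputable def ccWLdimOn (C : CoherentConfiguration Ω) (Δ : Set Ω) : ℕ :=
  WLdimOn C.ccColoring Δ

/-- A coherent configuration is critical if its WL-dimension is at least 2 and removing
the union of any nonempty proper subset of its fibers strictly decreases the WL-dimension. -/
def IsCritical (C : CoherentConfiguration Ω) : Prop :=
  2 ≤ C.ccWLdim ∧
    ¬ ∃ 𝓡 : Set (Set Ω), 𝓡.Nonempty ∧ 𝓡 ⊂ C.fiberSet ∧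
      C.ccWLdimOn (Set.univ \ ⋃₀ 𝓡) = C.ccWLdim

/-- The interspace between `R` and `B`: the relations contained in `R × B`. -/
def interspace (C : CoherentConfiguration Ω) (R B : Set Ω) : Set (Set (Ω × Ω)) :=
  {A | A ∈ C.rel ∧ A ⊆ R ×ˢ B}

/-- Adjacency of (distinct) fibers in the quotient graph: the interspace between them is
not homogeneous, i.e. contains more than one relation. -/
def QAdj (C : CoherentConfiguration Ω) (R B : Set Ω) : Prop :=
  R ≠ B ∧ (1 < (C.interspace R B).ncard ∨ 1 < (C.interspace B R).ncard)

/-- The quotient graph of a coherent configuration: vertices are the fibers, and two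
distinct fibers are adjacent iff their interspace is not homogeneous. -/
def quotientGraph (C : CoherentConfiguration Ω) : SimpleGraph C.fiberSet where
  Adj R B := C.QAdj (R : Set Ω) (B : Set Ω)
  symm := ⟨fun _ _ h => ⟨h.1.symm, h.2.symm⟩⟩
  loopless := ⟨fun _ h => h.1 rfl⟩

/-- The common out-degree of a relation `U ⊆ R × B` on the fiber `R` (by coherence, the
out-degree does not depend on the chosen vertex of `R`). -/
noncomputable def relDeg {Ω : Type} (U : Set (Ω × Ω)) (R : Set Ω) : ℕ :=
  sInf {d | ∃ v ∈ R, d = ({w | (v, w) ∈ U}).ncard}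

/-- The minimal degree of the interspace between `R` and `B`. -/
noncomputable def dmin (C : CoherentConfiguration Ω) (R B : Set Ω) : ℕ :=
  sInf {d | ∃ U ∈ C.interspace R B, d = relDeg U R}

/-- A module of a coherent configuration. -/
def IsModule (C : CoherentConfiguration Ω) (M : Set Ω) : Prop :=
  ∀ b ∉ M, ∀ A ∈ C.rel, {w ∈ M | (b, w) ∈ A} = ∅ ∨ {w ∈ M | (b, w) ∈ A} = M

/-- A set `𝓢` of fibers is dominating if every fiber belongs to `𝓢` or is adjacent in
the quotient graph to a fiber of `𝓢`. -/
def Dominating (C : CoherentConfiguration Ω) (𝓢 : Set (Set Ω)) : Prop :=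
  ∀ F ∈ C.fiberSet, F ∈ 𝓢 ∨ ∃ R ∈ 𝓢, C.QAdj F R

/-- An automorphism of the subconfiguration induced on `Δ`: a permutation of `Δ` mapping
each (restricted) relation onto itself. -/
def IsAutOn (C : CoherentConfiguration Ω) (Δ : Set Ω) (φ : Δ ≃ Δ) : Prop :=
  ∀ A ∈ C.rel, ∀ x y : Δ, ((φ x : Ω), (φ y : Ω)) ∈ A ↔ ((x : Ω), (y : Ω)) ∈ A

end CoherentConfiguration

/-- `ψ` extends `φ` (as permutations of subsets of `Ω`). -/
def ExtendsTo {Ω : Type} {Δ₁ Δ₂ : Set Ω} (φ : Δ₁ ≃ Δ₁) (ψ : Δ₂ ≃ Δ₂) : Prop :=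
  ∀ (x : Ω) (h₁ : x ∈ Δ₁) (h₂ : x ∈ Δ₂), (ψ ⟨x, h₂⟩ : Ω) = (φ ⟨x, h₁⟩ : Ω)

namespace CoherentConfiguration

variable {Ω : Type} [Fintype Ω]

/-- The union of the fibers contained in `Δ`, not contained in `⋃₀ 𝓕`, that are adjacent
in the quotient graph to a fiber from `𝓕`. -/
def boundary (C : CoherentConfiguration Ω) (Δ : Set Ω) (𝓕 : Set (Set Ω)) : Set Ω :=
  ⋃₀ {B | C.IsFiber B ∧ B ⊆ Δ ∧ ¬ B ⊆ ⋃₀ 𝓕 ∧ ∃ R ∈ 𝓕, C.QAdj B R}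

/-- The union `⋃₀ 𝓕` of the set of fibers `𝓕` is restorable inside the subconfiguration
induced on `Δ`: with `𝓡 := ⋃₀ 𝓕` and `𝓑` the union of the neighboring fibers (within `Δ`),
every automorphism of the configuration induced on `𝓑` that extends to an automorphism of
the configuration induced on `Δ ∖ 𝓡` also extends to an automorphism of the configuration
induced on `𝓡 ∪ 𝓑`. -/
def RestorableWithin (C : CoherentConfiguration Ω) (Δ : Set Ω) (𝓕 : Set (Set Ω)) : Prop :=
  ∀ φ : C.boundary Δ 𝓕 ≃ C.boundary Δ 𝓕,
    C.IsAutOn (C.boundary Δ 𝓕) φ →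
    (∃ ψ : (Δ \ ⋃₀ 𝓕 : Set Ω) ≃ (Δ \ ⋃₀ 𝓕 : Set Ω),
      C.IsAutOn (Δ \ ⋃₀ 𝓕) ψ ∧ ExtendsTo φ ψ) →
    ∃ ψ : (⋃₀ 𝓕 ∪ C.boundary Δ 𝓕 : Set Ω) ≃ (⋃₀ 𝓕 ∪ C.boundary Δ 𝓕 : Set Ω),
      C.IsAutOn (⋃₀ 𝓕 ∪ C.boundary Δ 𝓕) ψ ∧ ExtendsTo φ ψ

/-- The union of the set of fibers `𝓕` is restorable in `C`. -/
def Restorable (C : CoherentConfiguration Ω) (𝓕 : Set (Set Ω)) : Prop :=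
  C.RestorableWithin Set.univ 𝓕

/-- The fiber `Y` is taken care of regarding restorability of the fiber `R`. -/
def TakenCareOf (C : CoherentConfiguration Ω) (Y R : Set Ω) : Prop :=
  ∀ y ∈ Y, ∀ U ∈ C.interspace Y R,
    ∃ B ∈ C.fiberSet, B ≠ R ∧ B ≠ Y ∧ ∃ b ∈ B, ∃ UB ∈ C.interspace B R,
      {w | (b, w) ∈ UB} ⊆ {w | (y, w) ∈ U}

/-- `C` is at least as fine as `C'`: every relation of `C'` is a union of relations of `C`. -/
def Finer (C C' : CoherentConfiguration Ω) : Prop :=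
  ∀ A ∈ C'.rel, ∃ T ⊆ C.rel, A = ⋃₀ T

/-- Every relation of `D` is contained in some member of the family `R`. -/
def RefinesFamily (D : CoherentConfiguration Ω) (R : Set (Set (Ω × Ω))) : Prop :=
  ∀ A ∈ D.rel, ∃ B ∈ R, A ⊆ B

/-- `D` is the coherent closure of the family of relations `R`: the coarsest coherent
configuration each of whose relations is contained in some relation of `R`. -/
def IsCoherentClosure (R : Set (Set (Ω × Ω))) (D : CoherentConfiguration Ω) : Prop :=
  D.RefinesFamily R ∧ ∀ D' : CoherentConfiguration Ω, D'.RefinesFamily R → D'.Finer D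

end CoherentConfiguration

/-- A disjoint union of `s` complete bipartite graphs `K_{a,b}`, with all arcs directed
from an `a`-element part contained in `R` to a `b`-element part contained in `B`; the
parts partition `R` and `B` respectively. -/
def IsUCB {Ω : Type} (U : Set (Ω × Ω)) (R B : Set Ω) (s a b : ℕ) : Prop :=
  ∃ P Q : Fin s → Set Ω,
    (∀ i, (P i).ncard = a) ∧ (∀ i, (Q i).ncard = b) ∧
    (Pairwise fun i j => Disjoint (P i) (P j)) ∧
    (Pairwise fun i j => Disjoint (Q i) (Q j)) ∧
    (⋃ i, P i) = R ∧ (⋃ i, Q i) = B ∧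
    U = ⋃ i, (P i) ×ˢ (Q i)

/-- A disjoint union of `t` direction-alternating cycles of length `2m`, with all arcs
directed from `R` to `B`: the arcs are `r_{j,i} b_{j,i}` and `r_{j,i} b_{j,i+1}`. -/
def IsAltCycles {Ω : Type} (U : Set (Ω × Ω)) (R B : Set Ω) (t m : ℕ) : Prop :=
  ∃ r b : Fin t × ZMod m → Ω,
    Function.Injective r ∧ Function.Injective b ∧
    Set.range r = R ∧ Set.range b = B ∧
    U = (Set.range fun x : Fin t × ZMod m => (r x, b x)) ∪
        (Set.range fun x : Fin t × ZMod m => (r x, b (x.1, x.2 + 1)))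

/-- The incidence graph of the Fano plane, directed from `R` to `B`: `|R| = |B| = 7`,
every vertex of `R` has out-degree 3, and any two distinct vertices of `R` have exactly
one common out-neighbor. -/
def IsLF7 {Ω : Type} (U : Set (Ω × Ω)) (R B : Set Ω) : Prop :=
  U ⊆ R ×ˢ B ∧ R.ncard = 7 ∧ B.ncard = 7 ∧
    (∀ r ∈ R, ({w | (r, w) ∈ U}).ncard = 3) ∧
    (∀ r ∈ R, ∀ r' ∈ R, r ≠ r' → ({w | (r, w) ∈ U ∧ (r', w) ∈ U}).ncard = 1)

/-- The incidence graph of `K₄`, directed from `R` to `B`: `|R| = 4`, `|B| = 6`, every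
vertex of `R` has out-degree 3, every vertex of `B` has in-degree 2, and any two distinct
vertices of `R` have exactly one common out-neighbor. -/
def IsLK4 {Ω : Type} (U : Set (Ω × Ω)) (R B : Set Ω) : Prop :=
  U ⊆ R ×ˢ B ∧ R.ncard = 4 ∧ B.ncard = 6 ∧
    (∀ r ∈ R, ({w | (r, w) ∈ U}).ncard = 3) ∧
    (∀ w ∈ B, ({r | (r, w) ∈ U}).ncard = 2) ∧
    (∀ r ∈ R, ∀ r' ∈ R, r ≠ r' → ({w | (r, w) ∈ U ∧ (r', w) ∈ U}).ncard = 1)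

/-- A tree decomposition of a simple graph `G` with index type `I`. -/
structure TreeDecomp {V : Type} (G : SimpleGraph V) (I : Type) where
  tree : SimpleGraph I
  isTree : tree.IsTree
  bag : I → Set V
  mem_bag : ∀ v : V, ∃ i, v ∈ bag i
  edge_bag : ∀ v w : V, G.Adj v w → ∃ i, v ∈ bag i ∧ w ∈ bag i
  bag_connected : ∀ v : V, (tree.induce {i | v ∈ bag i}).Connected

/-- The treewidth of a simple graph: the minimum over all (finite) tree decompositions of
the maximum bag size minus one. -/
noncomputable def treewidth {V : Type} (G : SimpleGraph V) : ℕ :=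
  sInf {w | ∃ (m : ℕ) (D : TreeDecomp G (Fin m)), ∀ i, (D.bag i).ncard ≤ w + 1}

section Helpers

open Set

namespace CoherentConfiguration

variable {Ω : Type} [Fintype Ω] (C : CoherentConfiguration Ω)

lemma rel_eq_of_mem {A B : Set (Ω × Ω)} (hA : A ∈ C.rel) (hB : B ∈ C.rel)
    {p : Ω × Ω} (hpA : p ∈ A) (hpB : p ∈ B) : A = B := by
  obtain ⟨T, -, hu⟩ := C.exists_unique_rel p
  rw [hu A ⟨hA, hpA⟩, hu B ⟨hB, hpB⟩]

lemma fiber_nonempty {F : Set Ω} (hF : C.IsFiber F) : F.Nonempty := by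
  obtain ⟨p, hp⟩ := C.rel_nonempty _ hF
  exact ⟨p.1, hp.1⟩

omit [Fintype Ω] in
lemma mem_diag {F : Set Ω} {z : Ω} :
    (z, z) ∈ ({p : Ω × Ω | p.1 ∈ F ∧ p.1 = p.2}) ↔ z ∈ F := by simp

lemma fiber_disjoint {F G : Set Ω} (hF : C.IsFiber F) (hG : C.IsFiber G) (hne : F ≠ G)
    {x : Ω} (hxF : x ∈ F) (hxG : x ∈ G) : False := by
  have h := C.rel_eq_of_mem hF hG (p := (x, x)) ⟨hxF, rfl⟩ ⟨hxG, rfl⟩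
  apply hne
  ext z
  constructor
  · intro hz
    exact (mem_diag.mp (h ▸ (mem_diag.mpr hz)))
  · intro hz
    exact (mem_diag.mp (h.symm ▸ (mem_diag.mpr hz)))

/-- first coordinates of a relation stay in one fiber -/
lemma mem_fiber_left {A : Set (Ω × Ω)} (hA : A ∈ C.rel) {F : Set Ω} (hF : C.IsFiber F)
    {v w : Ω} (hvw : (v, w) ∈ A) (hv : v ∈ F) {v' w' : Ω} (h' : (v', w') ∈ A) : v' ∈ F := by
  have hcoh := C.coherent _ hF A hA A hA (v', w') h' (v, w) hvw
  have h1 : {u : Ω | (v, u) ∈ ({p : Ω × Ω | p.1 ∈ F ∧ p.1 = p.2}) ∧ (u, w) ∈ A} = {v} := by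
    ext u
    simp only [Set.mem_setOf_eq, Set.mem_singleton_iff]
    constructor
    · rintro ⟨⟨-, rfl⟩, -⟩; rfl
    · rintro rfl; exact ⟨⟨hv, rfl⟩, hvw⟩
  rw [h1, Set.ncard_singleton] at hcoh
  have hne : ({u : Ω | (v', u) ∈ ({p : Ω × Ω | p.1 ∈ F ∧ p.1 = p.2}) ∧ (u, w') ∈ A}).Nonempty := by
    rw [← Set.ncard_pos (Set.toFinite _), hcoh]; norm_num
  obtain ⟨u, ⟨hu1, -⟩, -⟩ := hne
  exact hu1

/-- second coordinates of a relation stay in one fiber -/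
lemma mem_fiber_right {A : Set (Ω × Ω)} (hA : A ∈ C.rel) {F : Set Ω} (hF : C.IsFiber F)
    {v w : Ω} (hvw : (v, w) ∈ A) (hw : w ∈ F) {v' w' : Ω} (h' : (v', w') ∈ A) : w' ∈ F := by
  have hcoh := C.coherent A hA _ hF A hA (v', w') h' (v, w) hvw
  have h1 : {u : Ω | (v, u) ∈ A ∧ (u, w) ∈ ({p : Ω × Ω | p.1 ∈ F ∧ p.1 = p.2})} = {w} := by
    ext u
    simp only [Set.mem_setOf_eq, Set.mem_singleton_iff]
    constructor
    · rintro ⟨-, -, rfl⟩; rfl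
    · rintro rfl; exact ⟨hvw, hw, rfl⟩
  rw [h1, Set.ncard_singleton] at hcoh
  have hne : ({u : Ω | (v', u) ∈ A ∧ (u, w') ∈ ({p : Ω × Ω | p.1 ∈ F ∧ p.1 = p.2})}).Nonempty := by
    rw [← Set.ncard_pos (Set.toFinite _), hcoh]; norm_num
  obtain ⟨u, -, hu1, hu2⟩ := hne
  exact (show u = w' from hu2) ▸ (show u ∈ F from hu1)

/-- out-degree is constant on a fiber -/
lemma deg_const {A : Set (Ω × Ω)} (hA : A ∈ C.rel) {F : Set Ω} (hF : C.IsFiber F)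
    {y y' : Ω} (hy : y ∈ F) (hy' : y' ∈ F) :
    ({w | (y, w) ∈ A}).ncard = ({w | (y', w) ∈ A}).ncard := by
  have hAt := C.transpose_mem A hA
  have hcoh := C.coherent A hA _ hAt _ hF (y, y) ⟨hy, rfl⟩ (y', y') ⟨hy', rfl⟩
  have h1 : ∀ z : Ω, {u : Ω | (z, u) ∈ A ∧ (u, z) ∈ {q : Ω × Ω | (q.2, q.1) ∈ A}}
      = {w | (z, w) ∈ A} := by
    intro z; ext u; simp only [Set.mem_setOf_eq]; tauto
  rw [h1, h1] at hcoh
  exact hcoh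

/-- automorphisms preserve fibers -/
lemma aut_mem_fiber {Δ : Set Ω} {φ : Δ ≃ Δ} (hφ : C.IsAutOn Δ φ) {F : Set Ω}
    (hF : C.IsFiber F) (x : Δ) : (x : Ω) ∈ F ↔ (φ x : Ω) ∈ F := by
  have h := hφ _ hF x x
  constructor
  · intro hx; exact (h.mpr ⟨hx, rfl⟩).1
  · intro hx; exact (h.mp ⟨hx, rfl⟩).1

lemma aut_mem_boundary {Δ : Set Ω} {φ : Δ ≃ Δ} (hφ : C.IsAutOn Δ φ) (Δ' : Set Ω)
    (𝓕 : Set (Set Ω)) (x : Δ) :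
    (x : Ω) ∈ C.boundary Δ' 𝓕 ↔ (φ x : Ω) ∈ C.boundary Δ' 𝓕 := by
  constructor
  · rintro ⟨B, hBmem, hxB⟩
    exact ⟨B, hBmem, (C.aut_mem_fiber hφ hBmem.1 x).mp hxB⟩
  · rintro ⟨B, hBmem, hxB⟩
    exact ⟨B, hBmem, (C.aut_mem_fiber hφ hBmem.1 x).mpr hxB⟩

end CoherentConfiguration

/-- Restriction of a set equivalence to an invariant subset. -/
def Equiv.setRestrict {Ω : Type*} {S T : Set Ω} (e : S ≃ S) (hTS : T ⊆ S)
    (h : ∀ x : S, (x : Ω) ∈ T ↔ (e x : Ω) ∈ T) : T ≃ T where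
  toFun x := ⟨e ⟨x, hTS x.2⟩, (h _).mp x.2⟩
  invFun x := ⟨e.symm ⟨x, hTS x.2⟩, by
    have h2 := h (e.symm ⟨x, hTS x.2⟩)
    rw [e.apply_symm_apply] at h2
    exact h2.mpr x.2⟩
  left_inv x := by
    apply Subtype.ext
    simp only [Subtype.coe_eta, Equiv.symm_apply_apply]
  right_inv x := by
    apply Subtype.ext
    simp only [Subtype.coe_eta, Equiv.apply_symm_apply]

lemma Equiv.setRestrict_coe {Ω : Type*} {S T : Set Ω} (e : S ≃ S) (hTS : T ⊆ S)
    (h : ∀ x : S, (x : Ω) ∈ T ↔ (e x : Ω) ∈ T) (x : T) :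
    (e.setRestrict hTS h x : Ω) = (e ⟨x, hTS x.2⟩ : Ω) := rfl

lemma CoherentConfiguration.isAutOn_setRestrict {Ω : Type} [Fintype Ω]
    (C : CoherentConfiguration Ω) {S T : Set Ω} {e : S ≃ S} (hTS : T ⊆ S)
    (h : ∀ x : S, (x : Ω) ∈ T ↔ (e x : Ω) ∈ T) (he : C.IsAutOn S e) :
    C.IsAutOn T (e.setRestrict hTS h) :=
  fun A hA x y => he A hA ⟨x, hTS x.2⟩ ⟨y, hTS y.2⟩

end Helpers

/-- If the fiber `Y` is taken care of regarding restorability of the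
fiber `R` and `R` is restorable in `C − Y`, then `R` is restorable in `C`. -/
theorem restorable_of_takenCareOf {Ω : Type} [Fintype Ω]
    (C : CoherentConfiguration Ω) (R Y : Set Ω)
    (hR : C.IsFiber R) (hY : C.IsFiber Y) (hne : R ≠ Y)
    (htc : C.TakenCareOf Y R) (hres : C.RestorableWithin Yᶜ {R}) :
    C.Restorable {R} := by
  classical
  unfold CoherentConfiguration.Restorable
  unfold CoherentConfiguration.RestorableWithin at hres ⊢
  rw [Set.sUnion_singleton] at hres
  rw [Set.sUnion_singleton]
  set 𝓑 : Set Ω := C.boundary Set.univ {R} with h𝓑def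
  set 𝓑' : Set Ω := C.boundary Yᶜ {R} with h𝓑'def
  intro φ hφ hext
  obtain ⟨ψ₀, hψ₀, hextψ₀⟩ := hext
  have hRYdisj : ∀ x, x ∈ R → x ∈ Y → False :=
    fun x hxR hxY => C.fiber_disjoint hR hY hne hxR hxY
  have hB'B : 𝓑' ⊆ 𝓑 := by
    rintro x ⟨B, ⟨hf, hsub, hns, hadj⟩, hxB⟩
    exact ⟨B, ⟨hf, Set.subset_univ B, hns, hadj⟩, hxB⟩
  have hB'Y : ∀ x ∈ 𝓑', x ∉ Y := by
    rintro x ⟨B, ⟨hf, hsub, hns, hadj⟩, hxB⟩ hxY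
    exact (hsub hxB) hxY
  have hBsub : ∀ x ∈ 𝓑, x ∈ Y ∨ x ∈ 𝓑' := by
    rintro x ⟨B, ⟨hf, -, hns, hadj⟩, hxB⟩
    by_cases hxY : x ∈ Y
    · exact Or.inl hxY
    · refine Or.inr ⟨B, ⟨hf, ?_, hns, hadj⟩, hxB⟩
      intro z hzB
      simp only [Set.mem_compl_iff]
      intro hzY
      by_cases hBY : B = Y
      · exact hxY (hBY ▸ hxB)
      · exact C.fiber_disjoint hf hY hBY hzB hzY
  have hEY : ∀ x ∈ (R ∪ 𝓑' : Set Ω), x ∉ Y := by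
    rintro x (hxR | hxB') hxY
    · exact hRYdisj x hxR hxY
    · exact hB'Y x hxB' hxY
  -- restrict φ to 𝓑'
  have hmemB' : ∀ x : 𝓑, (x : Ω) ∈ 𝓑' ↔ (φ x : Ω) ∈ 𝓑' :=
    fun x => C.aut_mem_boundary hφ Yᶜ {R} x
  set φ' := φ.setRestrict hB'B hmemB' with hφ'def
  have hφ' : C.IsAutOn 𝓑' φ' := C.isAutOn_setRestrict hB'B hmemB' hφ
  -- restrict ψ₀ to Yᶜ \ R
  have hT0 : (Yᶜ \ R : Set Ω) ⊆ (Set.univ \ R : Set Ω) := fun x hx => ⟨trivial, hx.2⟩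
  have hmem0 : ∀ x : (Set.univ \ R : Set Ω),
      (x : Ω) ∈ (Yᶜ \ R : Set Ω) ↔ ((ψ₀ x : Ω) ∈ (Yᶜ \ R : Set Ω)) := by
    intro x
    have hY0 := C.aut_mem_fiber hψ₀ hY x
    have h2 := (ψ₀ x).2.2
    have h3 := x.2.2
    simp only [Set.mem_diff, Set.mem_compl_iff]
    tauto
  set ψ₀' := ψ₀.setRestrict hT0 hmem0 with hψ₀'def
  have hψ₀'aut : C.IsAutOn (Yᶜ \ R) ψ₀' := C.isAutOn_setRestrict hT0 hmem0 hψ₀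
  have hextψ₀' : ExtendsTo φ' ψ₀' := by
    intro x h₁ h₂
    have hx𝓑 : x ∈ 𝓑 := hB'B h₁
    have hxU : x ∈ (Set.univ \ R : Set Ω) := hT0 h₂
    calc (ψ₀' ⟨x, h₂⟩ : Ω) = (ψ₀ ⟨x, hxU⟩ : Ω) := rfl
    _ = (φ ⟨x, hx𝓑⟩ : Ω) := hextψ₀ x hx𝓑 hxU
    _ = (φ' ⟨x, h₁⟩ : Ω) := rfl
  obtain ⟨ψ', hψ', hextψ'⟩ := hres φ' hφ' ⟨ψ₀', hψ₀'aut, hextψ₀'⟩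
  -- basic facts about φ and ψ'
  have hφY : ∀ x : 𝓑, (x : Ω) ∈ Y ↔ (φ x : Ω) ∈ Y := fun x => C.aut_mem_fiber hφ hY x
  have hψ'R : ∀ x : (R ∪ 𝓑' : Set Ω), (x : Ω) ∈ R ↔ (ψ' x : Ω) ∈ R :=
    fun x => C.aut_mem_fiber hψ' hR x
  -- the key forward claim
  have claimFwd : ∀ A ∈ C.rel, ∀ (a : Ω) (ha𝓑 : a ∈ 𝓑) (haY : a ∈ Y) (r : Ω) (hrR : r ∈ R)
      (hrE : r ∈ (R ∪ 𝓑' : Set Ω)),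
      (a, r) ∈ A → ((φ ⟨a, ha𝓑⟩ : Ω), (ψ' ⟨r, hrE⟩ : Ω)) ∈ A := by
    intro A hA a ha𝓑 haY r hrR hrE har
    have hAYR : A ∈ C.interspace Y R := by
      refine ⟨hA, ?_⟩
      rintro ⟨p1, p2⟩ hp
      exact ⟨C.mem_fiber_left hA hY har haY hp, C.mem_fiber_right hA hR har hrR hp⟩
    obtain ⟨B, hBfib, hBR, hBY, b, hbB, UB, hUBint, hsubBA⟩ := htc a haY A hAYR
    obtain ⟨hUBrel, hUBsub⟩ := hUBint
    have hφaY : (φ ⟨a, ha𝓑⟩ : Ω) ∈ Y := (hφY ⟨a, ha𝓑⟩).mp haY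
    have hψ'rR : (ψ' ⟨r, hrE⟩ : Ω) ∈ R := (hψ'R _).mp hrR
    by_cases hq : C.QAdj B R
    · -- main case: B is in the boundary
      have hB𝓑' : B ⊆ 𝓑' := by
        intro z hz
        refine ⟨B, ⟨hBfib, ?_, ?_, ⟨R, rfl, hq⟩⟩, hz⟩
        · intro z' hz'
          simp only [Set.mem_compl_iff]
          intro hz'Y
          exact C.fiber_disjoint hBfib hY hBY hz' hz'Y
        · intro hBsubR
          obtain ⟨b₀, hb₀⟩ := C.fiber_nonempty hBfib
          have hb₀R : b₀ ∈ ⋃₀ ({R} : Set (Set Ω)) := hBsubR hb₀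
          rw [Set.sUnion_singleton] at hb₀R
          exact C.fiber_disjoint hBfib hR hBR hb₀ hb₀R
      obtain ⟨W, ⟨hWrel, hWmem⟩, -⟩ := C.exists_unique_rel (a, b)
      have hWB : ∀ p q : Ω, (p, q) ∈ W → q ∈ B :=
        fun p q h => C.mem_fiber_right hWrel hBfib hWmem hbB h
      -- invariance of the inclusion b₁UB ⊆ a₁A along W
      have hinv : ∀ a₁ b₁, (a₁, b₁) ∈ W → ∀ w, (b₁, w) ∈ UB → (a₁, w) ∈ A := by
        intro a₁ b₁ hW1 w hw
        have hUBt := C.transpose_mem UB hUBrel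
        have hcoh := C.coherent A hA _ hUBt W hWrel (a₁, b₁) hW1 (a, b) hWmem
        have e1 : {u | ((a, b).1, u) ∈ A ∧ (u, (a, b).2) ∈ {q : Ω × Ω | (q.2, q.1) ∈ UB}}
            = {w | (b, w) ∈ UB} := by
          ext u
          simp only [Set.mem_setOf_eq]
          exact ⟨fun h => h.2, fun h => ⟨hsubBA h, h⟩⟩
        have e2 : {u | ((a₁, b₁).1, u) ∈ A ∧ (u, (a₁, b₁).2) ∈ {q : Ω × Ω | (q.2, q.1) ∈ UB}}
            = {u | (a₁, u) ∈ A ∧ (b₁, u) ∈ UB} := rfl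
        rw [e1, e2] at hcoh
        have hb₁B : b₁ ∈ B := hWB _ _ hW1
        have hdeg := C.deg_const hUBrel hBfib hbB hb₁B
        have hss : {u | (a₁, u) ∈ A ∧ (b₁, u) ∈ UB} ⊆ {w | (b₁, w) ∈ UB} := fun u h => h.2
        have heq : {u | (a₁, u) ∈ A ∧ (b₁, u) ∈ UB} = {w | (b₁, w) ∈ UB} := by
          refine Set.eq_of_subset_of_ncard_le hss ?_ (Set.toFinite _)
          rw [← hdeg]
          exact le_of_eq hcoh.symm
        have hw' : w ∈ {u | (a₁, u) ∈ A ∧ (b₁, u) ∈ UB} := by rw [heq]; exact hw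
        exact hw'.1
      -- bUB is nonempty
      obtain ⟨⟨b₂, r₂⟩, hbr₂⟩ := C.rel_nonempty UB hUBrel
      have hb₂B : b₂ ∈ B := (hUBsub hbr₂).1
      have hdegb := C.deg_const hUBrel hBfib hbB hb₂B
      have hne2 : ({w | (b, w) ∈ UB}).Nonempty := by
        rw [← Set.ncard_pos (Set.toFinite _), hdegb, Set.ncard_pos (Set.toFinite _)]
        exact ⟨r₂, hbr₂⟩
      obtain ⟨r₀, hr₀⟩ := hne2
      have har₀ : (a, r₀) ∈ A := hsubBA hr₀
      -- move from (a, r₀) to (a, r): there is b' with (a,b') ∈ W, (b',r) ∈ UB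
      have hcoh2 := C.coherent W hWrel UB hUBrel A hA (a, r) har (a, r₀) har₀
      have hne3 : ({u | ((a, r).1, u) ∈ W ∧ (u, (a, r).2) ∈ UB}).Nonempty := by
        rw [← Set.ncard_pos (Set.toFinite _), hcoh2, Set.ncard_pos (Set.toFinite _)]
        exact ⟨b, hWmem, hr₀⟩
      obtain ⟨b', hab', hb'r⟩ := hne3
      have hb'B : b' ∈ B := hWB _ _ hab'
      have hb'𝓑 : b' ∈ 𝓑 := hB'B (hB𝓑' hb'B)
      have hb'E : b' ∈ (R ∪ 𝓑' : Set Ω) := Or.inr (hB𝓑' hb'B)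
      have h1 : ((φ ⟨a, ha𝓑⟩ : Ω), (φ ⟨b', hb'𝓑⟩ : Ω)) ∈ W := (hφ W hWrel _ _).mpr hab'
      have h2 : ((ψ' ⟨b', hb'E⟩ : Ω), (ψ' ⟨r, hrE⟩ : Ω)) ∈ UB := (hψ' UB hUBrel _ _).mpr hb'r
      have h3 : (ψ' ⟨b', hb'E⟩ : Ω) = (φ ⟨b', hb'𝓑⟩ : Ω) := hextψ' b' (hB𝓑' hb'B) hb'E
      rw [h3] at h2
      exact hinv _ _ h1 _ h2
    · -- degenerate case: interspace B R is a single full relation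
      have hcard : ¬ (1 < (C.interspace B R).ncard ∨ 1 < (C.interspace R B).ncard) :=
        fun h => hq ⟨hBR, h⟩
      have hBRfull : ∀ w ∈ R, (b, w) ∈ UB := by
        intro w hw
        obtain ⟨A₁, ⟨hA₁rel, hA₁mem⟩, -⟩ := C.exists_unique_rel (b, w)
        have hA₁int : A₁ ∈ C.interspace B R := by
          refine ⟨hA₁rel, ?_⟩
          rintro ⟨p1, p2⟩ hp
          exact ⟨C.mem_fiber_left hA₁rel hBfib hA₁mem hbB hp,
            C.mem_fiber_right hA₁rel hR hA₁mem hw hp⟩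
        by_cases hAU : A₁ = UB
        · exact hAU ▸ hA₁mem
        · exfalso
          apply hcard
          left
          rw [Set.one_lt_ncard_iff (Set.toFinite _)]
          exact ⟨A₁, UB, hA₁int, ⟨hUBrel, hUBsub⟩, hAU⟩
      have hya : {w | (a, w) ∈ A} = R := by
        apply Set.Subset.antisymm
        · intro w hw
          exact C.mem_fiber_right hA hR har hrR hw
        · intro w hw
          exact hsubBA (hBRfull w hw)
      have hcard2 : ({w | ((φ ⟨a, ha𝓑⟩ : Ω), w) ∈ A}).ncard = R.ncard := by
        rw [← hya]
        exact C.deg_const hA hY hφaY haY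
      have hsub2 : {w | ((φ ⟨a, ha𝓑⟩ : Ω), w) ∈ A} ⊆ R :=
        fun w hw => C.mem_fiber_right hA hR har hrR hw
      have hfull : {w | ((φ ⟨a, ha𝓑⟩ : Ω), w) ∈ A} = R :=
        Set.eq_of_subset_of_ncard_le hsub2 (le_of_eq hcard2.symm) (Set.toFinite R)
      have : (ψ' ⟨r, hrE⟩ : Ω) ∈ {w | ((φ ⟨a, ha𝓑⟩ : Ω), w) ∈ A} := by
        rw [hfull]; exact hψ'rR
      exact this
  -- upgrade to an iff
  have claimIff : ∀ A ∈ C.rel, ∀ (a : Ω) (ha𝓑 : a ∈ 𝓑) (haY : a ∈ Y) (r : Ω) (hrR : r ∈ R)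
      (hrE : r ∈ (R ∪ 𝓑' : Set Ω)),
      (((φ ⟨a, ha𝓑⟩ : Ω), (ψ' ⟨r, hrE⟩ : Ω)) ∈ A ↔ (a, r) ∈ A) := by
    intro A hA a ha𝓑 haY r hrR hrE
    constructor
    · intro h
      obtain ⟨A₀, ⟨hA₀rel, hA₀mem⟩, -⟩ := C.exists_unique_rel (a, r)
      have h2 := claimFwd A₀ hA₀rel a ha𝓑 haY r hrR hrE hA₀mem
      have hAA₀ : A = A₀ := C.rel_eq_of_mem hA hA₀rel h h2
      exact hAA₀ ▸ hA₀mem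
    · exact claimFwd A hA a ha𝓑 haY r hrR hrE
  -- assemble the automorphism on R ∪ 𝓑
  have hDY : ∀ x : Ω, x ∈ (R ∪ 𝓑 : Set Ω) → x ∈ Y → x ∈ 𝓑 := by
    rintro x (hxR | hxB) hxY
    · exact (hRYdisj x hxR hxY).elim
    · exact hxB
  have hDnY : ∀ x : Ω, x ∈ (R ∪ 𝓑 : Set Ω) → x ∉ Y → x ∈ (R ∪ 𝓑' : Set Ω) := by
    rintro x (hxR | hxB) hxY
    · exact Or.inl hxR
    · rcases hBsub x hxB with h | h
      · exact absurd h hxY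
      · exact Or.inr h
  have hED : (R ∪ 𝓑' : Set Ω) ⊆ (R ∪ 𝓑 : Set Ω) := Set.union_subset_union_right R hB'B
  set f : (R ∪ 𝓑 : Set Ω) → (R ∪ 𝓑 : Set Ω) := fun x =>
    if h : (x : Ω) ∈ Y then ⟨(φ ⟨x, hDY x x.2 h⟩ : Ω), Or.inr (φ ⟨x, hDY x x.2 h⟩).2⟩
    else ⟨(ψ' ⟨x, hDnY x x.2 h⟩ : Ω), hED (ψ' ⟨x, hDnY x x.2 h⟩).2⟩ with hfdef
  have hfY : ∀ (x : (R ∪ 𝓑 : Set Ω)) (h : (x : Ω) ∈ Y),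
      (f x : Ω) = (φ ⟨x, hDY x x.2 h⟩ : Ω) := by
    intro x h; rw [hfdef]; simp only [dif_pos h]
  have hfnY : ∀ (x : (R ∪ 𝓑 : Set Ω)) (h : (x : Ω) ∉ Y),
      (f x : Ω) = (ψ' ⟨x, hDnY x x.2 h⟩ : Ω) := by
    intro x h; rw [hfdef]; simp only [dif_neg h]
  have hfmemY : ∀ x : (R ∪ 𝓑 : Set Ω), ((x : Ω) ∈ Y ↔ (f x : Ω) ∈ Y) := by
    intro x
    by_cases h : (x : Ω) ∈ Y
    · rw [hfY x h]; exact iff_of_true h ((hφY _).mp h)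
    · rw [hfnY x h]; exact iff_of_false h (hEY _ (ψ' ⟨x, hDnY x x.2 h⟩).2)
  have hfinj : Function.Injective f := by
    intro x y hxy
    have hval : (f x : Ω) = (f y : Ω) := congrArg Subtype.val hxy
    by_cases hx : (x : Ω) ∈ Y <;> by_cases hy' : (y : Ω) ∈ Y
    · rw [hfY x hx, hfY y hy'] at hval
      have h6 := φ.injective (Subtype.ext hval)
      have h7 := congrArg Subtype.val h6
      exact Subtype.ext h7
    · exfalso
      have h5 := (hfmemY x).mp hx
      rw [hxy] at h5
      exact hy' ((hfmemY y).mpr h5)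
    · exfalso
      have h5 := (hfmemY y).mp hy'
      rw [← hxy] at h5
      exact hx ((hfmemY x).mpr h5)
    · rw [hfnY x hx, hfnY y hy'] at hval
      have h6 := ψ'.injective (Subtype.ext hval)
      have h7 := congrArg Subtype.val h6
      exact Subtype.ext h7
  refine ⟨Equiv.ofBijective f (Finite.injective_iff_bijective.mp hfinj), ?_, ?_⟩
  · -- IsAutOn
    intro A hA x y
    show ((f x : Ω), (f y : Ω)) ∈ A ↔ ((x : Ω), (y : Ω)) ∈ A
    by_cases hx : (x : Ω) ∈ Y <;> by_cases hy' : (y : Ω) ∈ Y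
    · rw [hfY x hx, hfY y hy']
      exact hφ A hA _ _
    · rw [hfY x hx, hfnY y hy']
      rcases hDnY y y.2 hy' with hyR | hyB'
      · exact claimIff A hA x (hDY x x.2 hx) hx y hyR (hDnY y y.2 hy')
      · have h3 : (ψ' ⟨(y : Ω), hDnY y y.2 hy'⟩ : Ω) = (φ ⟨(y : Ω), hB'B hyB'⟩ : Ω) :=
          hextψ' y hyB' (hDnY y y.2 hy')
        rw [h3]
        exact hφ A hA _ _
    · rw [hfnY x hx, hfY y hy']
      rcases hDnY x x.2 hx with hxR | hxB'
      · have hAt := C.transpose_mem A hA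
        have h4 := claimIff _ hAt y (hDY y y.2 hy') hy' x hxR (hDnY x x.2 hx)
        exact h4
      · have h3 : (ψ' ⟨(x : Ω), hDnY x x.2 hx⟩ : Ω) = (φ ⟨(x : Ω), hB'B hxB'⟩ : Ω) :=
          hextψ' x hxB' (hDnY x x.2 hx)
        rw [h3]
        exact hφ A hA _ _
    · rw [hfnY x hx, hfnY y hy']
      exact hψ' A hA _ _
  · -- ExtendsTo
    intro x h₁ h₂
    show (f ⟨x, h₂⟩ : Ω) = (φ ⟨x, h₁⟩ : Ω)
    by_cases hx : x ∈ Y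
    · rw [hfY ⟨x, h₂⟩ hx]
    · rw [hfnY ⟨x, h₂⟩ hx]
      have hx𝓑' : x ∈ 𝓑' := by
        rcases hBsub x h₁ with h | h
        · exact absurd h hx
        · exact h
      exact hextψ' x hx𝓑' (hDnY x h₂ hx)
end

section
/- Let C be a coherent configuration and let (R, B, Y) be an induced path in Q(C), i.e., R, B, Y are pairwise distinct fibers, R is adjacent to B and B is adjacent to Y in Q(C), and R is not adjacent to Y in Q(C). Then for all r ∈ R, y ∈ Y, U ∈ C[R,B] and U' ∈ C[Y,B] one has d(U) · d(U') = |B| · |rU ∩ yU'|. Moreover, |B| is not a prime number. -/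
namespace CCAux
open CoherentConfiguration
variable {Ω : Type} [Fintype Ω] (C : CoherentConfiguration Ω)

lemma fiber_nonempty {R : Set Ω} (hR : C.IsFiber R) : R.Nonempty := by
  obtain ⟨p, hp⟩ := C.rel_nonempty _ hR
  exact ⟨p.1, hp.1⟩

lemma rel_subset {A : Set (Ω × Ω)} {R B : Set Ω} (hA : A ∈ C.rel)
    (hR : C.IsFiber R) (hB : C.IsFiber B) {v w : Ω} (hvw : (v, w) ∈ A)
    (hv : v ∈ R) (hw : w ∈ B) : A ⊆ R ×ˢ B := by
  rintro ⟨v', w'⟩ hp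
  constructor
  · have h := C.coherent _ hR A hA A hA (v, w) hvw (v', w') hp
    have e1 : {u : Ω | ((v, w).1, u) ∈ {p : Ω × Ω | p.1 ∈ R ∧ p.1 = p.2} ∧ (u, (v, w).2) ∈ A}
        = {v} := by
      ext u
      simp only [Set.mem_setOf_eq, Set.mem_singleton_iff]
      constructor
      · rintro ⟨⟨_, h2⟩, _⟩; exact h2.symm
      · rintro rfl; exact ⟨⟨hv, rfl⟩, hvw⟩
    rw [e1, Set.ncard_singleton] at h
    have hne : ({u : Ω | ((v', w').1, u) ∈ {p : Ω × Ω | p.1 ∈ R ∧ p.1 = p.2}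
        ∧ (u, (v', w').2) ∈ A}).Nonempty := by
      rw [← Set.ncard_pos (Set.toFinite _), ← h]; norm_num
    obtain ⟨u, hu⟩ := hne
    exact hu.1.1
  · have h := C.coherent A hA _ hB A hA (v, w) hvw (v', w') hp
    have e1 : {u : Ω | ((v, w).1, u) ∈ A ∧ (u, (v, w).2) ∈ {p : Ω × Ω | p.1 ∈ B ∧ p.1 = p.2}}
        = {w} := by
      ext u
      simp only [Set.mem_setOf_eq, Set.mem_singleton_iff]
      constructor
      · rintro ⟨_, ⟨_, h2⟩⟩; exact h2
      · rintro rfl; exact ⟨hvw, hw, rfl⟩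
    rw [e1, Set.ncard_singleton] at h
    have hne : ({u : Ω | ((v', w').1, u) ∈ A
        ∧ (u, (v', w').2) ∈ {p : Ω × Ω | p.1 ∈ B ∧ p.1 = p.2}}).Nonempty := by
      rw [← Set.ncard_pos (Set.toFinite _), ← h]; norm_num
    obtain ⟨u, hu⟩ := hne
    have := hu.2
    simp only [Set.mem_setOf_eq] at this
    rw [← this.2]; exact this.1

lemma deg_const {U : Set (Ω × Ω)} {R : Set Ω} (hU : U ∈ C.rel) (hR : C.IsFiber R)
    {v v' : Ω} (hv : v ∈ R) (hv' : v' ∈ R) :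
    ({w | (v, w) ∈ U}).ncard = ({w | (v', w) ∈ U}).ncard := by
  have h := C.coherent U hU _ (C.transpose_mem U hU) _ hR (v, v) ⟨hv, rfl⟩ (v', v') ⟨hv', rfl⟩
  have e : ∀ x : Ω, {u : Ω | ((x, x).1, u) ∈ U ∧ (u, (x, x).2) ∈ {q : Ω × Ω | (q.2, q.1) ∈ U}}
      = {w | (x, w) ∈ U} := by
    intro x; ext u; simp only [Set.mem_setOf_eq]; tauto
  rw [e v, e v'] at h
  exact h

lemma inter_const {U U' T : Set (Ω × Ω)} (hU : U ∈ C.rel) (hU' : U' ∈ C.rel) (hT : T ∈ C.rel)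
    {r y r₀ y₀ : Ω} (h1 : (r, y) ∈ T) (h2 : (r₀, y₀) ∈ T) :
    ({w | (r, w) ∈ U ∧ (y, w) ∈ U'}).ncard = ({w | (r₀, w) ∈ U ∧ (y₀, w) ∈ U'}).ncard := by
  have h := C.coherent U hU _ (C.transpose_mem U' hU') T hT (r, y) h1 (r₀, y₀) h2
  have e : ∀ a b : Ω, {u : Ω | ((a, b).1, u) ∈ U ∧ (u, (a, b).2) ∈ {q : Ω × Ω | (q.2, q.1) ∈ U'}}
      = {w | (a, w) ∈ U ∧ (b, w) ∈ U'} := by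
    intro a b; ext u; simp only [Set.mem_setOf_eq]
  rw [e r y, e r₀ y₀] at h
  exact h

lemma rel_disjoint {A A' : Set (Ω × Ω)} (hA : A ∈ C.rel) (hA' : A' ∈ C.rel) (hne : A ≠ A')
    {p : Ω × Ω} (hp : p ∈ A) : p ∉ A' := by
  intro hp'
  obtain ⟨X, _, hu⟩ := C.exists_unique_rel p
  exact hne ((hu A ⟨hA, hp⟩).trans (hu A' ⟨hA', hp'⟩).symm)

lemma interspace_transpose {R B : Set Ω} {A : Set (Ω × Ω)} (hA : A ∈ C.interspace B R) :
    {q : Ω × Ω | (q.2, q.1) ∈ A} ∈ C.interspace R B := by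
  refine ⟨C.transpose_mem A hA.1, ?_⟩
  intro q hq
  have := hA.2 hq
  exact ⟨this.2, this.1⟩

lemma two_rels {R B : Set Ω}
    (h : 1 < (C.interspace R B).ncard ∨ 1 < (C.interspace B R).ncard) :
    ∃ U₁ ∈ C.interspace R B, ∃ U₂ ∈ C.interspace R B, U₁ ≠ U₂ := by
  rcases h with h | h
  · obtain ⟨a, ha, b, hb, hab⟩ := (Set.one_lt_ncard (Set.toFinite _)).mp h
    exact ⟨a, ha, b, hb, hab⟩
  · obtain ⟨a, ha, b, hb, hab⟩ := (Set.one_lt_ncard (Set.toFinite _)).mp h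
    refine ⟨_, interspace_transpose C ha, _, interspace_transpose C hb, ?_⟩
    intro he
    apply hab
    ext ⟨x, y⟩
    have := Set.ext_iff.mp he (y, x)
    simpa using this

open Classical in
lemma sum_row_col (P : Ω → Ω → Prop) :
    ∑ y : Ω, ({w | P y w}).ncard = ∑ w : Ω, ({y | P y w}).ncard := by
  have h : ∀ (Q : Ω → Prop), ({x | Q x}).ncard = ∑ x : Ω, if Q x then 1 else 0 := by
    intro Q
    rw [Set.ncard_eq_toFinset_card', Set.toFinset_setOf, Finset.card_filter]
  simp_rw [h]
  exact Finset.sum_comm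

open Classical in
lemma sum_const_on (S : Set Ω) (c : ℕ) (f : Ω → ℕ) (hf : ∀ x ∈ S, f x = c)
    (hf0 : ∀ x ∉ S, f x = 0) : ∑ x : Ω, f x = S.ncard * c := by
  have hcard : S.ncard = ∑ x : Ω, if x ∈ S then 1 else 0 := by
    rw [show S = {x | x ∈ S} from rfl, Set.ncard_eq_toFinset_card', Set.toFinset_setOf,
      Finset.card_filter]
    exact Finset.sum_congr rfl fun x _ => by congr
  have hfx : ∀ x, f x = if x ∈ S then c else 0 := by
    intro x; by_cases h : x ∈ S <;> simp [h, hf, hf0]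
  rw [hcard, Finset.sum_mul]
  simp_rw [hfx]
  congr 1; ext x; by_cases h : x ∈ S <;> simp [h]

lemma deg_bounds {R B : Set Ω} (hR : C.IsFiber R) {U₁ U₂ : Set (Ω × Ω)}
    (h₁ : U₁ ∈ C.interspace R B) (h₂ : U₂ ∈ C.interspace R B) (hne : U₁ ≠ U₂)
    {r : Ω} (hr : r ∈ R) :
    0 < ({w | (r, w) ∈ U₁}).ncard ∧ ({w | (r, w) ∈ U₁}).ncard < B.ncard := by
  have pos : ∀ U : Set (Ω × Ω), U ∈ C.interspace R B → 0 < ({w | (r, w) ∈ U}).ncard := by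
    intro U hU
    obtain ⟨⟨v, w⟩, hvw⟩ := C.rel_nonempty U hU.1
    have hv : v ∈ R := (hU.2 hvw).1
    rw [deg_const C hU.1 hR hr hv]
    exact (Set.ncard_pos (Set.toFinite _)).mpr ⟨w, hvw⟩
  refine ⟨pos U₁ h₁, ?_⟩
  have hdisj : Disjoint {w | (r, w) ∈ U₁} {w | (r, w) ∈ U₂} := by
    rw [Set.disjoint_left]
    intro w hw1 hw2
    exact rel_disjoint C h₁.1 h₂.1 hne hw1 hw2
  have hsub : {w | (r, w) ∈ U₁} ∪ {w | (r, w) ∈ U₂} ⊆ B := by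
    rintro w (hw | hw)
    · exact (h₁.2 hw).2
    · exact (h₂.2 hw).2
  have hu := Set.ncard_union_eq hdisj (Set.toFinite _) (Set.toFinite _)
  have hle := Set.ncard_le_ncard hsub (Set.toFinite B)
  rw [hu] at hle
  have := pos U₂ h₂
  omega

end CCAux

/-- (Interspace divisor theorem.) For an induced path `(R, B, Y)` in the
quotient graph: `d(U)·d(U') = |B| · |rU ∩ yU'|` for all `r ∈ R`, `y ∈ Y`,
`U ∈ C[R,B]`, `U' ∈ C[Y,B]`; moreover `|B|` is not prime. -/
theorem interspace_divisor {Ω : Type} [Fintype Ω] (C : CoherentConfiguration Ω)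
    (R B Y : Set Ω) (hR : C.IsFiber R) (hB : C.IsFiber B) (hY : C.IsFiber Y)
    (hRB : C.QAdj R B) (hBY : C.QAdj B Y) (hRYne : R ≠ Y) (hRY : ¬ C.QAdj R Y) :
    (∀ r ∈ R, ∀ y ∈ Y, ∀ U ∈ C.interspace R B, ∀ U' ∈ C.interspace Y B,
      ({w | (r, w) ∈ U}).ncard * ({w | (y, w) ∈ U'}).ncard =
        B.ncard * ({w | (r, w) ∈ U ∧ (y, w) ∈ U'}).ncard) ∧
    ¬ Nat.Prime B.ncard := by
  classical
  have hYpos : 0 < Y.ncard :=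
    (Set.ncard_pos (Set.toFinite _)).mpr (CCAux.fiber_nonempty C hY)
  obtain ⟨w₀, hw₀⟩ := CCAux.fiber_nonempty C hB
  -- the interspace between R and Y is trivial
  have hle : (C.interspace R Y).ncard ≤ 1 := by
    by_contra h
    exact hRY ⟨hRYne, Or.inl (lt_of_not_ge h)⟩
  have sameT : ∀ r ∈ R, ∀ y ∈ Y, ∀ r' ∈ R, ∀ y' ∈ Y, ∃ T ∈ C.rel,
      (r, y) ∈ T ∧ (r', y') ∈ T := by
    intro r hr y hy r' hr' y' hy'
    obtain ⟨T, ⟨hTrel, hTm⟩, _⟩ := C.exists_unique_rel (r, y)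
    obtain ⟨T', ⟨hT'rel, hT'm⟩, _⟩ := C.exists_unique_rel (r', y')
    have hTi : T ∈ C.interspace R Y :=
      ⟨hTrel, CCAux.rel_subset C hTrel hR hY hTm hr hy⟩
    have hT'i : T' ∈ C.interspace R Y :=
      ⟨hT'rel, CCAux.rel_subset C hT'rel hR hY hT'm hr' hy'⟩
    have hTT : T = T' := (Set.ncard_le_one (Set.toFinite _)).mp hle T hTi T' hT'i
    exact ⟨T, hTrel, hTm, hTT ▸ hT'm⟩
  have key : ∀ r ∈ R, ∀ y ∈ Y, ∀ U ∈ C.interspace R B, ∀ U' ∈ C.interspace Y B,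
      ({w | (r, w) ∈ U}).ncard * ({w | (y, w) ∈ U'}).ncard =
        B.ncard * ({w | (r, w) ∈ U ∧ (y, w) ∈ U'}).ncard := by
    intro r hr y hy U hU U' hU'
    obtain ⟨hUrel, hUsub⟩ := hU
    obtain ⟨hU'rel, hU'sub⟩ := hU'
    set dU := ({w | (r, w) ∈ U}).ncard with hdU
    set dU' := ({w | (y, w) ∈ U'}).ncard with hdU'
    set c := ({w | (r, w) ∈ U ∧ (y, w) ∈ U'}).ncard with hc
    set d' := ({y' | (y', w₀) ∈ U'}).ncard with hd'
    -- transpose of U'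
    have hU'tr : {q : Ω × Ω | (q.2, q.1) ∈ U'} ∈ C.interspace B Y :=
      CCAux.interspace_transpose C ⟨hU'rel, hU'sub⟩
    have F4 : ∀ w ∈ B, ({y' | (y', w) ∈ U'}).ncard = d' := by
      intro w hw
      have e : ∀ x : Ω, {y' | (y', x) ∈ U'} = {y' | (x, y') ∈ {q : Ω × Ω | (q.2, q.1) ∈ U'}} := by
        intro x; ext u; simp [Set.mem_setOf_eq]
      rw [e w, e w₀] at *
      exact CCAux.deg_const C hU'tr.1 hB hw hw₀
    have F1 : ∀ r' ∈ R, ∀ y' ∈ Y, ({w | (r', w) ∈ U ∧ (y', w) ∈ U'}).ncard = c := by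
      intro r' hr' y' hy'
      obtain ⟨T, hTrel, hm1, hm2⟩ := sameT r' hr' y' hy' r hr y hy
      exact CCAux.inter_const C hUrel hU'rel hTrel hm1 hm2
    have F2 : ∀ r' ∈ R, ({w | (r', w) ∈ U}).ncard = dU := fun r' hr' =>
      CCAux.deg_const C hUrel hR hr' hr
    have F3 : ∀ y' ∈ Y, ({w | (y', w) ∈ U'}).ncard = dU' := fun y' hy' =>
      CCAux.deg_const C hU'rel hY hy' hy
    -- equation 1
    have eq1 : Y.ncard * c = dU * d' := by
      have swap := CCAux.sum_row_col (fun y' w => (r, w) ∈ U ∧ (y', w) ∈ U')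
      have lhs : ∑ y' : Ω, ({w | (r, w) ∈ U ∧ (y', w) ∈ U'}).ncard = Y.ncard * c := by
        apply CCAux.sum_const_on Y c
        · exact fun y' hy' => F1 r hr y' hy'
        · intro y' hy'
          have : {w | (r, w) ∈ U ∧ (y', w) ∈ U'} = ∅ := by
            ext w
            simp only [Set.mem_setOf_eq, Set.mem_empty_iff_false, iff_false]
            rintro ⟨_, h2⟩
            exact hy' (hU'sub h2).1
          rw [this, Set.ncard_empty]
      have rhs : ∑ w : Ω, ({y' | (r, w) ∈ U ∧ (y', w) ∈ U'}).ncard = dU * d' := by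
        apply CCAux.sum_const_on {w | (r, w) ∈ U} d'
        · intro w hw
          have e : {y' | (r, w) ∈ U ∧ (y', w) ∈ U'} = {y' | (y', w) ∈ U'} := by
            ext u; simp only [Set.mem_setOf_eq]; exact ⟨fun h => h.2, fun h => ⟨hw, h⟩⟩
          rw [e]
          exact F4 w (hUsub hw).2
        · intro w hw
          have e : {y' | (r, w) ∈ U ∧ (y', w) ∈ U'} = ∅ := by
            ext u
            simp only [Set.mem_setOf_eq, Set.mem_empty_iff_false, iff_false]
            rintro ⟨h1, _⟩
            exact hw h1
          rw [e, Set.ncard_empty]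
      rw [← lhs, swap, rhs]
    -- equation 2
    have eq2 : Y.ncard * dU' = B.ncard * d' := by
      have swap := CCAux.sum_row_col (fun y' w => (y', w) ∈ U')
      have lhs : ∑ y' : Ω, ({w | (y', w) ∈ U'}).ncard = Y.ncard * dU' := by
        apply CCAux.sum_const_on Y dU'
        · exact F3
        · intro y' hy'
          have e : {w | (y', w) ∈ U'} = ∅ := by
            ext w
            simp only [Set.mem_setOf_eq, Set.mem_empty_iff_false, iff_false]
            intro h
            exact hy' (hU'sub h).1
          rw [e, Set.ncard_empty]
      have rhs : ∑ w : Ω, ({y' | (y', w) ∈ U'}).ncard = B.ncard * d' := by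
        apply CCAux.sum_const_on B d'
        · exact F4
        · intro w hw
          have e : {y' | (y', w) ∈ U'} = ∅ := by
            ext u
            simp only [Set.mem_setOf_eq, Set.mem_empty_iff_false, iff_false]
            intro h
            exact hw (hU'sub h).2
          rw [e, Set.ncard_empty]
      rw [← lhs, swap, rhs]
    have main : Y.ncard * (dU * dU') = Y.ncard * (B.ncard * c) := by
      calc Y.ncard * (dU * dU') = dU * (Y.ncard * dU') := by ring
        _ = dU * (B.ncard * d') := by rw [eq2]
        _ = B.ncard * (dU * d') := by ring
        _ = B.ncard * (Y.ncard * c) := by rw [← eq1]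
        _ = Y.ncard * (B.ncard * c) := by ring
    exact Nat.eq_of_mul_eq_mul_left hYpos main
  refine ⟨key, ?_⟩
  intro hp
  obtain ⟨r, hr⟩ := CCAux.fiber_nonempty C hR
  obtain ⟨y, hy⟩ := CCAux.fiber_nonempty C hY
  obtain ⟨U₁, hU₁, U₂, hU₂, hne⟩ := CCAux.two_rels C hRB.2
  obtain ⟨V₁, hV₁, V₂, hV₂, hne'⟩ := CCAux.two_rels C hBY.2.symm
  obtain ⟨p1, l1⟩ := CCAux.deg_bounds C hR hU₁ hU₂ hne hr
  obtain ⟨p2, l2⟩ := CCAux.deg_bounds C hY hV₁ hV₂ hne' hy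
  have k := key r hr y hy U₁ hU₁ V₁ hV₁
  have hdvd : B.ncard ∣ ({w | (r, w) ∈ U₁}).ncard * ({w | (y, w) ∈ V₁}).ncard :=
    ⟨_, k⟩
  rcases (Nat.Prime.dvd_mul hp).mp hdvd with h | h
  · exact absurd (Nat.le_of_dvd p1 h) (not_le.mpr l1)
  · exact absurd (Nat.le_of_dvd p2 h) (not_le.mpr l2)
end
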